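/- There exists a signal f₀ ∈ PW^1_π such that limsup_{N→∞} sup_{t∈ℝ} |(S_N f₀)(t)| = ∞; in particular, since every function in PW^1_π is bounded on ℝ, also limsup_{N→∞} sup_{t∈ℝ} |f₀(t) − (S_N f₀)(t)| = ∞. -/

import Mathlib

open MeasureTheory Filter Topology Real Complex
open scoped ENNReal NNReal

noncomputable section

/-- The normalized sinc function `sin(πx)/(πx)` (with value `1` at `x = 0`). -/
def sincπ (x : ℝ) : ℝ := if x = 0 then 1 else Real.sin (π * x) / (π * x)

/-- `f` belongs to the Paley–Wiener space `PW^p_σ`: it is the inverse Fourier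
transform of some `g ∈ L^p([-σ, σ])`. -/
def IsPW (p : ℝ≥0∞) (σ : ℝ) (f : ℂ → ℂ) : Prop :=
  ∃ g : ℝ → ℂ, MemLp g p (volume.restrict (Set.Icc (-σ) σ)) ∧
    ∀ z : ℂ, f z = ((1 / (2 * π) : ℝ) : ℂ) *
      ∫ ω in Set.Icc (-σ) σ, g ω * Complex.exp (Complex.I * (ω : ℂ) * z)

/-- The symmetric partial sum of degree `N` of the Shannon sampling series. -/
def shannonSum (f : ℂ → ℂ) (N : ℕ) (t : ℝ) : ℂ :=
  ∑ n ∈ Finset.Icc (-(N : ℤ)) (N : ℤ), f (n : ℂ) * ((sincπ (t - n) : ℝ) : ℂ)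

/-!
The spectrum is `g(ω) = ∑ₖ 2⁻ᵏ F_{2Nₖ}(ω - π)`, a series of Fejér kernels shifted by `π`.
Each kernel is nonnegative with integral `2π`, so `g ∈ L¹`, and the shift makes the samples
alternate: `f₀(n) = (-1)ⁿ aₙ` with `aₙ ≥ 2⁻ᵏ / 2` for `|n| ≤ Nₖ`. At `t = N + 1/2` the sinc
factors are `(-1)^(N-n) / (π (N + 1/2 - n))`, so all signs cancel and
`|S_{Nₖ} f₀(Nₖ + 1/2)| ≥ 2⁻ᵏ / (2π) · H_{2Nₖ+1}`, which is unbounded once `Nₖ` grows fast enough.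
As `f₀` is bounded on `ℝ`, `f₀ - S_N f₀` is unbounded as well.
-/

namespace MeasureTheory

variable {α E : Type*} [MeasurableSpace α] {μ : Measure α} [NormedAddCommGroup E] [CompleteSpace E]

theorem integrable_tsum_of_summable_integral_norm {F : ℕ → α → E}
    (hF_int : ∀ i, Integrable (F i) μ) (hF_sum : Summable fun i ↦ ∫ a, ‖F i a‖ ∂μ) :
    Integrable (fun a ↦ ∑' i, F i a) μ := by
  have hlint : ∑' i, ∫⁻ a, ‖F i a‖ₑ ∂μ ≠ ⊤ := by
    simp_rw [← ofReal_integral_norm_eq_lintegral_enorm (hF_int _),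
      ← ENNReal.ofReal_tsum_of_nonneg (fun i ↦ integral_nonneg fun a ↦ norm_nonneg (F i a)) hF_sum]
    exact ENNReal.ofReal_ne_top
  have hsummable : ∀ᵐ a ∂μ, Summable fun i ↦ F i a := by
    refine (summable_norm_of_tsum_eLpNorm_ne_top le_rfl (fun i ↦ (hF_int i).1) ?_).mono
      fun a ha ↦ ha.of_norm
    simpa only [eLpNorm_one_eq_lintegral_enorm] using hlint
  refine ⟨aestronglyMeasurable_of_tendsto_ae atTop
    (fun n ↦ Finset.aestronglyMeasurable_fun_sum _ fun i _ ↦ (hF_int i).1)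
    (hsummable.mono fun a ha ↦ ha.hasSum.tendsto_sum_nat), ?_⟩
  calc ∫⁻ a, ‖∑' i, F i a‖ₑ ∂μ ≤ ∫⁻ a, ∑' i, ‖F i a‖ₑ ∂μ :=
        lintegral_mono fun a ↦ enorm_tsum_le_tsum_enorm
    _ = ∑' i, ∫⁻ a, ‖F i a‖ₑ ∂μ := lintegral_tsum fun i ↦ (hF_int i).1.enorm
    _ < ⊤ := hlint.lt_top

end MeasureTheory

theorem integral_exp_I_mul_sub_pi_mul_int (m : ℤ) :
    ∫ ω in Set.Icc (-π) π, cexp (I * (ω - π) * m) = if m = 0 then 2 * (π : ℂ) else 0 := by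
  have hshift := intervalIntegral.integral_comp_sub_right (a := -π) (b := π)
    (fun x : ℝ ↦ cexp (I * x * m)) π
  push_cast at hshift
  rw [integral_Icc_eq_integral_Ioc, ← intervalIntegral.integral_of_le (by linarith [pi_pos]),
    hshift]
  split_ifs with hm
  · simp [hm]
    ring
  · have hc : I * m ≠ 0 := mul_ne_zero I_ne_zero (Int.cast_ne_zero.mpr hm)
    simp_rw [mul_right_comm I _ (m : ℂ)]
    rw [integral_exp_mul_complex hc]
    have hperiod : I * m * ((-π - π : ℝ) : ℂ) = ((-m : ℤ) : ℂ) * (2 * π * I) := by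
      push_cast
      ring
    rw [hperiod, exp_int_mul_two_pi_mul_I, sub_self, ofReal_zero, mul_zero, Complex.exp_zero,
      sub_self, zero_div]

theorem exp_I_mul_pi_mul_int (n : ℤ) : cexp (I * π * n) = (-1) ^ n := by
  rw [show I * π * n = n * (π * I) by ring, exp_int_mul, exp_pi_mul_I]

def fejerKernel (A : ℕ) (x : ℝ) : ℝ :=
  normSq (∑ j ∈ Finset.Icc (0 : ℤ) A, cexp (I * x * j)) / (A + 1)

theorem fejerKernel_nonneg (A : ℕ) (x : ℝ) : 0 ≤ fejerKernel A x :=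
  div_nonneg (normSq_nonneg _) (by positivity)

@[fun_prop]
theorem continuous_fejerKernel (A : ℕ) : Continuous (fejerKernel A) := by
  unfold fejerKernel
  fun_prop

def fejerCoeff (A : ℕ) (n : ℤ) : ℝ := ((A + 1 - |n|).toNat : ℝ) / (A + 1)

theorem fejerCoeff_zero (A : ℕ) : fejerCoeff A 0 = 1 := by
  rw [fejerCoeff, abs_zero, sub_zero, show ((A : ℤ) + 1).toNat = A + 1 by omega]
  push_cast
  exact div_self (by positivity)

theorem fejerCoeff_nonneg (A : ℕ) (n : ℤ) : 0 ≤ fejerCoeff A n := by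
  unfold fejerCoeff
  positivity

theorem fejerCoeff_le_one (A : ℕ) (n : ℤ) : fejerCoeff A n ≤ 1 := by
  have := abs_nonneg n
  rw [fejerCoeff, div_le_one (by positivity)]
  exact_mod_cast (show ((A : ℤ) + 1 - |n|).toNat ≤ A + 1 by omega)

theorem one_half_le_fejerCoeff {N : ℕ} {n : ℤ} (hn : |n| ≤ N) : 1 / 2 ≤ fejerCoeff (2 * N) n := by
  have hcount : ((N + 1 : ℕ) : ℝ) ≤ (((2 * N : ℕ) + 1 - |n|).toNat : ℕ) :=
    Nat.cast_le.mpr (by omega)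
  rw [fejerCoeff, le_div_iff₀ (by positivity)]
  push_cast at hcount ⊢
  linarith

theorem card_filter_add_mem_Icc (A : ℕ) (n : ℤ) :
    ({j ∈ Finset.Icc (0 : ℤ) A | j + n ∈ Finset.Icc (0 : ℤ) A} : Finset ℤ).card
      = (A + 1 - |n|).toNat := by
  have hfilter : {j ∈ Finset.Icc (0 : ℤ) A | j + n ∈ Finset.Icc (0 : ℤ) A}
      = Finset.Icc (max 0 (-n)) (min A (A - n)) := by
    ext j
    simp only [Finset.mem_filter, Finset.mem_Icc]
    omega
  rw [hfilter, Int.card_Icc]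
  congr 1
  rcases abs_cases n with ⟨h, _⟩ | ⟨h, _⟩ <;> omega

theorem fejerKernel_sub_pi_mul_exp (A : ℕ) (ω : ℝ) (n : ℤ) :
    (fejerKernel A (ω - π) : ℂ) * cexp (I * ω * n) = ∑ j ∈ Finset.Icc (0 : ℤ) A,
      ∑ l ∈ Finset.Icc (0 : ℤ) A,
        ((A + 1 : ℂ)⁻¹ * cexp (I * π * n)) * cexp (I * (ω - π) * (j - l + n : ℤ)) := by
  rw [fejerKernel, ofReal_div, ← mul_conj, map_sum, Finset.sum_mul_sum]
  simp only [Finset.sum_div, Finset.sum_mul, ← exp_conj]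
  refine Finset.sum_congr rfl fun j _ ↦ Finset.sum_congr rfl fun l _ ↦ ?_
  push_cast
  rw [div_eq_inv_mul, mul_assoc, mul_assoc, ← Complex.exp_add, ← Complex.exp_add,
    mul_assoc ((A : ℂ) + 1)⁻¹, ← Complex.exp_add]
  simp only [map_mul, map_sub, conj_I, conj_ofReal, map_intCast]
  ring_nf

theorem integral_fejerKernel_sub_pi_mul_exp (A : ℕ) (n : ℤ) :
    ∫ ω in Set.Icc (-π) π, (fejerKernel A (ω - π) : ℂ) * cexp (I * ω * n)
      = 2 * π * (-1) ^ n * fejerCoeff A n := by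
  have hint (m : ℤ) : Integrable (fun ω : ℝ ↦ cexp (I * (ω - π) * m))
      (volume.restrict (Set.Icc (-π) π)) :=
    Continuous.integrableOn_Icc (by fun_prop)
  have hcond (j l : ℤ) : (j - l + n = 0) ↔ (j + n = l) := by omega
  -- Only the pairs `(j, j + n)` of the double sum survive the integration.
  simp_rw [fejerKernel_sub_pi_mul_exp]
  rw [integral_finsetSum _ fun j _ ↦ integrable_finsetSum _ fun l _ ↦ (hint _).const_mul _]
  simp_rw [integral_finsetSum _ fun l _ ↦ (hint _).const_mul _, integral_const_mul,
    integral_exp_I_mul_sub_pi_mul_int, hcond, mul_ite, mul_zero, Finset.sum_ite_eq,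
    ← Finset.sum_filter, Finset.sum_const, card_filter_add_mem_Icc, exp_I_mul_pi_mul_int,
    nsmul_eq_mul, fejerCoeff]
  push_cast
  ring

theorem integral_fejerKernel_sub_pi (A : ℕ) :
    ∫ ω in Set.Icc (-π) π, fejerKernel A (ω - π) = 2 * π := by
  have h := integral_fejerKernel_sub_pi_mul_exp A 0
  simp only [Int.cast_zero, mul_zero, Complex.exp_zero, mul_one, zpow_zero, fejerCoeff_zero,
    ofReal_one] at h
  exact_mod_cast h

section FejerSeries

variable (c : ℕ → ℝ) (N : ℕ → ℕ)

-- Where the series diverges (at `ω = π` when `N` grows fast) `tsum` returns `0`; those `ω` form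
-- a null set.
def fejerSeries (ω : ℝ) : ℂ := ∑' k, ((c k * fejerKernel (2 * N k) (ω - π) : ℝ) : ℂ)

def fejerSeriesCoeff (n : ℤ) : ℝ := ∑' k, c k * fejerCoeff (2 * N k) n

variable {c}

theorem summable_integral_norm_fejerSeries_term (hc0 : ∀ k, 0 ≤ c k) (hc : Summable c) :
    Summable fun k ↦ ∫ ω in Set.Icc (-π) π, ‖((c k * fejerKernel (2 * N k) (ω - π) : ℝ) : ℂ)‖ := by
  refine (hc.mul_left (2 * π)).congr fun k ↦ ?_
  simp_rw [norm_real, norm_of_nonneg (mul_nonneg (hc0 k) (fejerKernel_nonneg _ _))]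
  rw [integral_const_mul, integral_fejerKernel_sub_pi]
  ring

theorem integrableOn_fejerSeries (hc0 : ∀ k, 0 ≤ c k) (hc : Summable c) :
    IntegrableOn (fejerSeries c N) (Set.Icc (-π) π) :=
  integrable_tsum_of_summable_integral_norm (fun k ↦ Continuous.integrableOn_Icc (by fun_prop))
    (summable_integral_norm_fejerSeries_term N hc0 hc)

theorem integral_fejerSeries_mul_exp (hc0 : ∀ k, 0 ≤ c k) (hc : Summable c) (n : ℤ) :
    ∫ ω in Set.Icc (-π) π, fejerSeries c N ω * cexp (I * ω * n)
      = 2 * π * (-1) ^ n * fejerSeriesCoeff c N n := by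
  have hnorm (k : ℕ) (ω : ℝ) : ‖((c k * fejerKernel (2 * N k) (ω - π) : ℝ) : ℂ) * cexp (I * ω * n)‖
      = ‖((c k * fejerKernel (2 * N k) (ω - π) : ℝ) : ℂ)‖ := by
    rw [norm_mul, norm_exp]
    simp
  simp_rw [fejerSeries, ← tsum_mul_right]
  rw [← integral_tsum_of_summable_integral_norm
    (fun k ↦ Continuous.integrableOn_Icc (by fun_prop))
    (by simpa only [hnorm] using summable_integral_norm_fejerSeries_term N hc0 hc)]
  simp_rw [ofReal_mul, mul_assoc ((c _ : ℝ) : ℂ), integral_const_mul,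
    integral_fejerKernel_sub_pi_mul_exp, fejerSeriesCoeff, ofReal_tsum, ofReal_mul,
    ← tsum_mul_left]
  congr 1 with k
  ring

theorem le_fejerSeriesCoeff (hc0 : ∀ k, 0 ≤ c k) (hc : Summable c) {k : ℕ} {n : ℤ}
    (hn : |n| ≤ N k) : c k / 2 ≤ fejerSeriesCoeff c N n := by
  have hsummable : Summable fun k ↦ c k * fejerCoeff (2 * N k) n :=
    hc.of_nonneg_of_le (fun k ↦ mul_nonneg (hc0 k) (fejerCoeff_nonneg _ _))
      fun k ↦ mul_le_of_le_one_right (hc0 k) (fejerCoeff_le_one _ _)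
  calc c k / 2 = c k * (1 / 2) := by ring
    _ ≤ c k * fejerCoeff (2 * N k) n :=
        mul_le_mul_of_nonneg_left (one_half_le_fejerCoeff hn) (hc0 k)
    _ ≤ fejerSeriesCoeff c N n :=
      hsummable.le_tsum k fun j _ ↦ mul_nonneg (hc0 j) (fejerCoeff_nonneg _ _)

end FejerSeries

def invFourierIcc (σ : ℝ) (g : ℝ → ℂ) (z : ℂ) : ℂ :=
  ((1 / (2 * π) : ℝ) : ℂ) * ∫ ω in Set.Icc (-σ) σ, g ω * cexp (I * ω * z)

theorem invFourierIcc_fejerSeries_intCast {c : ℕ → ℝ} (N : ℕ → ℕ) (hc0 : ∀ k, 0 ≤ c k)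
    (hc : Summable c) (n : ℤ) :
    invFourierIcc π (fejerSeries c N) n = (-1) ^ n * fejerSeriesCoeff c N n := by
  rw [invFourierIcc, integral_fejerSeries_mul_exp N hc0 hc]
  push_cast
  field_simp

theorem IsPW.exists_norm_le {p : ℝ≥0∞} {σ : ℝ} {f : ℂ → ℂ} (hf : IsPW p σ f) :
    ∃ C, ∀ t : ℝ, ‖f t‖ ≤ C := by
  obtain ⟨g, -, hfg⟩ := hf
  refine ⟨1 / (2 * π) * ∫ ω in Set.Icc (-σ) σ, ‖g ω‖, fun t ↦ ?_⟩
  have hnorm (ω : ℝ) : ‖g ω * cexp (I * ω * t)‖ = ‖g ω‖ := by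
    rw [norm_mul, norm_exp]
    simp
  rw [hfg, norm_mul, norm_real, norm_of_nonneg (by positivity)]
  gcongr
  exact (norm_integral_le_integral_norm _).trans_eq (by simp_rw [hnorm])

theorem sincπ_natCast_add_half_sub {N : ℕ} {n : ℤ} (hn : n ≤ N) :
    sincπ (N + 1 / 2 - n) = (-1) ^ (N - n) / (π * (N + 1 / 2 - n)) := by
  have hpos : (0 : ℝ) < N + 1 / 2 - n := by
    have : (n : ℝ) ≤ N := mod_cast hn
    linarith
  have harg : π * (N + 1 / 2 - n) = π / 2 + ((N - n : ℤ) : ℝ) * π := by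
    push_cast
    ring
  rw [sincπ, if_neg hpos.ne', harg, sin_add_int_mul_pi, Real.sin_pi_div_two, mul_one, ← harg]

theorem shannonSum_natCast_add_half {f : ℂ → ℂ} {a : ℤ → ℝ} (hf : ∀ n : ℤ, f n = (-1) ^ n * a n)
    (N : ℕ) : shannonSum f N (N + 1 / 2) =
      (-1) ^ (N : ℤ) * ((∑ n ∈ Finset.Icc (-(N : ℤ)) N, a n / (π * (N + 1 / 2 - n)) : ℝ) : ℂ) := by
  rw [shannonSum, ofReal_sum, Finset.mul_sum]
  refine Finset.sum_congr rfl fun n hn ↦ ?_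
  have hsign : (-1 : ℂ) ^ (N : ℤ) = (-1) ^ n * (-1) ^ ((N : ℤ) - n) := by
    rw [← zpow_add₀ (by norm_num), add_sub_cancel]
  rw [hf, sincπ_natCast_add_half_sub (Finset.mem_Icc.mp hn).2, hsign]
  push_cast
  ring

theorem sum_range_one_div_le_sum_Icc_one_div (N : ℕ) :
    ∑ i ∈ Finset.range (2 * N + 1), 1 / ((i : ℝ) + 1)
      ≤ ∑ n ∈ Finset.Icc (-(N : ℤ)) N, 1 / ((N : ℝ) + 1 / 2 - n) := by
  calc ∑ i ∈ Finset.range (2 * N + 1), 1 / ((i : ℝ) + 1)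
      ≤ ∑ i ∈ Finset.range (2 * N + 1), 1 / ((N : ℝ) + 1 / 2 - ((N - i : ℤ) : ℝ)) := by
        refine Finset.sum_le_sum fun i _ ↦ ?_
        have : (0 : ℝ) ≤ i := i.cast_nonneg
        push_cast
        exact one_div_le_one_div_of_le (by linarith) (by linarith)
    _ = ∑ n ∈ Finset.Icc (-(N : ℤ)) N, 1 / ((N : ℝ) + 1 / 2 - n) := by
        refine Finset.sum_nbij' (fun i ↦ (N : ℤ) - i) (fun n ↦ ((N : ℤ) - n).toNat) ?_ ?_ ?_ ?_
          fun _ _ ↦ rfl <;> intro x hx <;> simp only [Finset.mem_range, Finset.mem_Icc] at hx ⊢ <;>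
          omega

theorem le_norm_shannonSum_natCast_add_half {f : ℂ → ℂ} {a : ℤ → ℝ}
    (hf : ∀ n : ℤ, f n = (-1) ^ n * a n) {N : ℕ} {b : ℝ} (hb : 0 ≤ b)
    (hab : ∀ n ∈ Finset.Icc (-(N : ℤ)) N, b ≤ a n) :
    b / π * ∑ i ∈ Finset.range (2 * N + 1), 1 / ((i : ℝ) + 1) ≤ ‖shannonSum f N (N + 1 / 2)‖ := by
  have hpos (n : ℤ) (hn : n ∈ Finset.Icc (-(N : ℤ)) N) : 0 < π * (N + 1 / 2 - n) := by
    have : (n : ℝ) ≤ N := mod_cast (Finset.mem_Icc.mp hn).2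
    have := pi_pos
    nlinarith
  rw [shannonSum_natCast_add_half hf, norm_mul, norm_zpow, norm_neg, norm_one, one_zpow, one_mul,
    norm_real, Real.norm_eq_abs]
  calc b / π * ∑ i ∈ Finset.range (2 * N + 1), 1 / ((i : ℝ) + 1)
      ≤ b / π * ∑ n ∈ Finset.Icc (-(N : ℤ)) N, 1 / ((N : ℝ) + 1 / 2 - n) := by
        gcongr
        exact sum_range_one_div_le_sum_Icc_one_div N
    _ = ∑ n ∈ Finset.Icc (-(N : ℤ)) N, b / (π * (N + 1 / 2 - n)) := by
        rw [Finset.mul_sum]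
        refine Finset.sum_congr rfl fun n _ ↦ ?_
        field_simp
    _ ≤ ∑ n ∈ Finset.Icc (-(N : ℤ)) N, a n / (π * (N + 1 / 2 - n)) :=
        Finset.sum_le_sum fun n hn ↦ div_le_div_of_nonneg_right (hab n hn) (hpos n hn).le
    _ ≤ _ := le_abs_self _

theorem exists_seq_le_sum_range_one_div (B : ℕ → ℝ) :
    ∃ N : ℕ → ℕ, ∀ k, k ≤ N k ∧ B k ≤ ∑ i ∈ Finset.range (2 * N k + 1), 1 / ((i : ℝ) + 1) := by
  have hdiv : Tendsto (fun m : ℕ ↦ ∑ i ∈ Finset.range (2 * m + 1), 1 / ((i : ℝ) + 1)) atTop atTop :=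
    tendsto_sum_range_one_div_nat_succ_atTop.comp
      (tendsto_atTop_mono (fun m ↦ show m ≤ 2 * m + 1 by omega) tendsto_id)
  choose N hN using fun k ↦ ((eventually_ge_atTop k).and (hdiv.eventually_ge_atTop (B k))).exists
  exact ⟨N, hN⟩

theorem limsup_iSup_nnnorm_eq_top {ι E : Type*} [SeminormedAddGroup E] {u : ℕ → ι → E}
    (h : ∀ M : ℝ, ∃ᶠ m in atTop, ∃ i, M ≤ ‖u m i‖) :
    limsup (fun m ↦ ⨆ i, (‖u m i‖₊ : ℝ≥0∞)) atTop = ⊤ :=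
  ENNReal.eq_top_of_forall_nnreal_le fun r ↦ le_limsup_of_frequently_le <|
    (h r).mono fun _ ⟨i, hi⟩ ↦ le_iSup_of_le i (ENNReal.coe_le_coe.mpr hi)

theorem frequently_le_norm_shannonSum {c : ℕ → ℝ} {N : ℕ → ℕ} (hc0 : ∀ k, 0 < c k)
    (hc : Summable c) (hN : ∀ k, k ≤ N k ∧
      2 * π * k / c k ≤ ∑ i ∈ Finset.range (2 * N k + 1), 1 / ((i : ℝ) + 1)) (M : ℝ) :
    ∃ᶠ m in atTop, ∃ t : ℝ, M ≤ ‖shannonSum (invFourierIcc π (fejerSeries c N)) m t‖ := by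
  rw [frequently_atTop]
  intro m₀
  obtain ⟨K, hK⟩ := exists_nat_ge (max M m₀)
  have hsamples := invFourierIcc_fejerSeries_intCast N (fun k ↦ (hc0 k).le) hc
  have hm₀ : m₀ ≤ K := mod_cast (le_max_right M (m₀ : ℝ)).trans hK
  have hb : 0 ≤ c K / 2 := by linarith [hc0 K]
  refine ⟨N K, hm₀.trans (hN K).1, N K + 1 / 2, ?_⟩
  calc M ≤ K := (le_max_left _ _).trans hK
    _ = c K / 2 / π * (2 * π * K / c K) := by field_simp [(hc0 K).ne', pi_ne_zero]
    _ ≤ c K / 2 / π * ∑ i ∈ Finset.range (2 * N K + 1), 1 / ((i : ℝ) + 1) :=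
        mul_le_mul_of_nonneg_left (hN K).2 (div_nonneg hb pi_pos.le)
    _ ≤ _ := le_norm_shannonSum_natCast_add_half hsamples hb fun n hn ↦
        le_fejerSeriesCoeff N (fun k ↦ (hc0 k).le) hc (abs_le.mpr (Finset.mem_Icc.mp hn))

/-- There is `f₀ ∈ PW^1_π` for which the Shannon sampling series
is not uniformly bounded on `ℝ`: `limsup_N sup_t |(S_N f₀)(t)| = ∞`, and in
particular `limsup_N sup_t |f₀(t) − (S_N f₀)(t)| = ∞`. -/
theorem shannon_weak_divergence_PW1 :
    ∃ f₀ : ℂ → ℂ, IsPW 1 π f₀ ∧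
      limsup (fun N : ℕ => ⨆ t : ℝ, (‖shannonSum f₀ N t‖₊ : ℝ≥0∞)) atTop = ⊤ ∧
      limsup (fun N : ℕ => ⨆ t : ℝ, (‖f₀ (t : ℂ) - shannonSum f₀ N t‖₊ : ℝ≥0∞)) atTop = ⊤ := by
  set c : ℕ → ℝ := fun k ↦ (1 / 2) ^ k
  have hc0 (k : ℕ) : 0 < c k := by positivity
  obtain ⟨N, hN⟩ := exists_seq_le_sum_range_one_div fun k ↦ 2 * π * k / c k
  set f := invFourierIcc π (fejerSeries c N)
  have hf : IsPW 1 π f := ⟨fejerSeries c N, memLp_one_iff_integrable.mpr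
    (integrableOn_fejerSeries N (fun k ↦ (hc0 k).le) summable_geometric_two), fun _ ↦ rfl⟩
  have hlarge := frequently_le_norm_shannonSum hc0 summable_geometric_two hN
  obtain ⟨C, hC⟩ := hf.exists_norm_le
  refine ⟨f, hf, limsup_iSup_nnnorm_eq_top hlarge,
    limsup_iSup_nnnorm_eq_top fun M ↦ (hlarge (M + C)).mono fun m ⟨t, ht⟩ ↦ ⟨t, ?_⟩⟩
  linarith [norm_sub_norm_le (shannonSum f m t) (f t), norm_sub_rev (shannonSum f m t) (f t), hC t]
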